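/- arXiv:1310.7616 — 4 statements merged into one kernel-verified Lean document; each statement's English description precedes it below -/
import Mathlib

section
/- Let H be a real m×n matrix with full column rank n, and let S_A ⊆ {1,…,m} be a set of meter (row) indices. There exists a nonzero covert attack vector, i.e. a nonzero a ∈ ℝ^m such that a = Hy for some y ∈ ℝⁿ and a_i = 0 for every i ∉ S_A, if and only if the submatrix of H obtained by deleting all rows with indices in S_A does not have full column rank n (i.e., the network becomes unobservable when the adversary meters are removed). -/
/-!
Full column rank means `y ↦ H y` is injective, so nonzero covert attacks `a = H y` correspond
exactly to nonzero states `y`. Such an `a` vanishes outside `S_A` iff `y` lies in the kernel of the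
rows outside `S_A`, and that kernel is nontrivial iff those rows lose full column rank.
-/

open Matrix

namespace Matrix

variable {m n R : Type*} [Fintype n]

theorem rank_eq_card_iff_injective_mulVec {K : Type*} [Field K] (A : Matrix m n K) :
    A.rank = Fintype.card n ↔ Function.Injective A.mulVec := by
  have h := LinearMap.finrank_range_add_finrank_ker A.mulVecLin
  rw [Module.finrank_fintype_fun_eq_card] at h
  rw [rank, ← coe_mulVecLin, ← LinearMap.ker_eq_bot, ← Submodule.finrank_eq_zero]
  omega

theorem submatrix_id_mulVec_apply [NonUnitalNonAssocSemiring R] {l : Type*} (A : Matrix m n R)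
    (r : l → m) (y : n → R) (i : l) : (A.submatrix r id *ᵥ y) i = (A *ᵥ y) (r i) :=
  rfl

theorem not_injective_mulVec_submatrix_iff [CommRing R] (A : Matrix m n R) (S : Set m) :
    ¬Function.Injective (A.submatrix (fun i : {i // i ∉ S} => (i : m)) id).mulVec ↔
      ∃ y ≠ 0, ∀ i ∉ S, (A *ᵥ y) i = 0 := by
  rw [← coe_mulVecLin, injective_iff_map_eq_zero]
  push Not
  simp only [coe_mulVecLin, funext_iff, submatrix_id_mulVec_apply, Pi.zero_apply, Subtype.forall]
  exact exists_congr fun y => and_comm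

theorem exists_ne_zero_mulVec_supported_iff [NonUnitalNonAssocSemiring R] {A : Matrix m n R}
    (hA : Function.Injective A.mulVec) (S : Set m) :
    (∃ a : m → R, a ≠ 0 ∧ (∃ y, a = A *ᵥ y) ∧ ∀ i ∉ S, a i = 0) ↔
      ∃ y ≠ 0, ∀ i ∉ S, (A *ᵥ y) i = 0 := by
  constructor
  · rintro ⟨a, ha, ⟨y, rfl⟩, hS⟩
    exact ⟨y, by rintro rfl; exact ha (mulVec_zero A), hS⟩
  · rintro ⟨y, hy, hS⟩
    exact ⟨A *ᵥ y, fun h => hy (hA (h.trans (mulVec_zero A).symm)), ⟨y, rfl⟩, hS⟩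

end Matrix

/-- **Covert attack feasibility (Theorem 1, existence part).**
For a DC measurement matrix `H` with full column rank `n` and a set `SA` of adversary
meters, there exists a nonzero covert attack vector (a vector `a = H y` supported on `SA`)
if and only if the matrix obtained from `H` by deleting the rows indexed by `SA` does not
have full column rank `n`. -/
theorem covert_attack_exists_iff_unobservable {m n : ℕ}
    (H : Matrix (Fin m) (Fin n) ℝ) (hH : H.rank = n) (SA : Finset (Fin m)) :
    (∃ a : Fin m → ℝ, a ≠ 0 ∧ (∃ y : Fin n → ℝ, a = H.mulVec y) ∧
        ∀ i ∉ SA, a i = 0) ↔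
      (H.submatrix (fun i : {i : Fin m // i ∉ SA} => (i : Fin m)) id).rank ≠ n := by
  have hrank {k : Type} (A : Matrix k (Fin n) ℝ) : A.rank = n ↔ Function.Injective A.mulVec := by
    rw [← rank_eq_card_iff_injective_mulVec, Fintype.card_fin]
  rw [Ne, hrank]
  exact (exists_ne_zero_mulVec_supported_iff ((hrank H).1 hH) SA).trans
    (not_injective_mulVec_submatrix_iff H SA).symm
end

section
/- Let H be a real m×n matrix with full column rank n, Σ an m×m real symmetric positive definite matrix, W = I − H(Hᵀ Σ⁻¹ H)⁻¹ Hᵀ Σ⁻¹, and let Ω be the diagonal matrix with Ω_{ii} = 1/√((WΣ)_{ii}) if (WΣ)_{ii} ≠ 0 and Ω_{ii} = 0 otherwise. Let e be a random vector in ℝ^m with multivariate Gaussian distribution of mean 0 and covariance Σ, let x ∈ ℝⁿ, a ∈ ℝ^m, and let r̃ = Ω W (Hx + e + a) be the normalized residue of the attacked measurements. Then for any set F ⊆ {1,…,m} of framed meters, E[Σ_{i∈F} r̃_i²] = Σ_{i∈F} (Ω W a)_i² + C, where C is the number of indices i ∈ F with (WΣ)_{ii} ≠ 0. -/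
/-!
Because `W H = 0`, the state drops out of the residue, and the `i`-th normalized residue is
`(Ω W)ᵢ ⬝ e + (Ω W a)ᵢ`, a real Gaussian with mean `(Ω W a)ᵢ` and variance
`(Ω W Σ Wᵀ Ω)ᵢᵢ`; its second moment is variance plus squared mean. Since `W` is the
`Σ⁻¹`-orthogonal projection onto the complement of the range of `H`, `W Σ Wᵀ = W Σ`, so that
variance is `Ωᵢᵢ² (W Σ)ᵢᵢ`, which the choice of `Ω` makes `1` or `0`.
-/

open Matrix MeasureTheory ProbabilityTheory

/-- A random vector `e` on a probability space has the multivariate Gaussian distribution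
with mean `0` and covariance `Sig` iff every linear functional `l ⬝ᵥ e` of it is a real
Gaussian with mean `0` and variance `l ⬝ᵥ Sig l`. -/
def IsCenteredGaussianVector {Ω' : Type*} [MeasurableSpace Ω'] (P : Measure Ω')
    {m : ℕ} (e : Ω' → Fin m → ℝ) (Sig : Matrix (Fin m) (Fin m) ℝ) : Prop :=
  ∀ l : Fin m → ℝ,
    P.map (fun ω => l ⬝ᵥ e ω) = gaussianReal 0 (l ⬝ᵥ Sig.mulVec l).toNNReal

open scoped NNReal

namespace ProbabilityTheory

lemma integral_sq_gaussianReal (μ : ℝ) (v : ℝ≥0) :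
    ∫ x, x ^ 2 ∂gaussianReal μ v = v + μ ^ 2 := by
  have h := variance_eq_sub (memLp_id_gaussianReal (μ := μ) (v := v) 2)
  simp only [variance_id_gaussianReal, Pi.pow_apply, id_eq, integral_id_gaussianReal] at h
  linarith

namespace HasLaw

variable {Ω : Type*} [MeasurableSpace Ω] {P : Measure Ω} {X : Ω → ℝ} {μ : ℝ}
  {v : ℝ≥0}

lemma integrable_sq_of_gaussianReal (hX : HasLaw X (gaussianReal μ v) P) :
    Integrable (fun ω => X ω ^ 2) P := by
  have h := (memLp_id_gaussianReal (μ := μ) (v := v) 2).integrable_sq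
  rw [← hX.map_eq] at h
  exact (integrable_map_measure (by fun_prop) hX.aemeasurable).1 h

lemma integral_sq_of_gaussianReal (hX : HasLaw X (gaussianReal μ v) P) :
    ∫ ω, X ω ^ 2 ∂P = v + μ ^ 2 := by
  rw [← integral_sq_gaussianReal]
  exact hX.integral_comp (f := fun x => x ^ 2) (by fun_prop)

end HasLaw

end ProbabilityTheory

namespace IsCenteredGaussianVector

variable {Ω : Type*} [MeasurableSpace Ω] {P : Measure Ω} {m : ℕ} {e : Ω → Fin m → ℝ}
  {Sig : Matrix (Fin m) (Fin m) ℝ}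

lemma hasLaw_dotProduct (he : IsCenteredGaussianVector P e Sig) (l : Fin m → ℝ) :
    HasLaw (fun ω => l ⬝ᵥ e ω) (gaussianReal 0 (l ⬝ᵥ Sig *ᵥ l).toNNReal) P where
  -- a map that is not a.e.-measurable pushes `P` forward to `0`, which is not a Gaussian
  aemeasurable := by
    by_contra h
    exact IsProbabilityMeasure.ne_zero (gaussianReal _ _)
      ((he l).symm.trans (Measure.map_of_not_aemeasurable h))
  map_eq := he l

lemma integral_sum_sq_mulVec_add (he : IsCenteredGaussianVector P e Sig)
    {k : ℕ} (M : Matrix (Fin k) (Fin m) ℝ) (b : Fin m → ℝ) (F : Finset (Fin k)) :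
    ∫ ω, ∑ i ∈ F, (M *ᵥ (e ω + b)) i ^ 2 ∂P =
      ∑ i ∈ F, (((M i ⬝ᵥ Sig *ᵥ M i).toNNReal : ℝ) + (M *ᵥ b) i ^ 2) := by
  have hlaw (i : Fin k) : HasLaw (fun ω => (M *ᵥ (e ω + b)) i)
      (gaussianReal (0 + (M *ᵥ b) i) (M i ⬝ᵥ Sig *ᵥ M i).toNNReal) P := by
    simp only [mulVec_add, Pi.add_apply]
    exact gaussianReal_add_const (he.hasLaw_dotProduct (M i)) _
  rw [integral_finsetSum F fun i _ => (hlaw i).integrable_sq_of_gaussianReal]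
  refine Finset.sum_congr rfl fun i _ => ?_
  rw [(hlaw i).integral_sq_of_gaussianReal, zero_add]

end IsCenteredGaussianVector

lemma sq_ite_one_div_sqrt_mul_self {d : ℝ} (hd : 0 ≤ d) :
    (if d ≠ 0 then 1 / Real.sqrt d else 0) ^ 2 * d = if d ≠ 0 then 1 else 0 := by
  split_ifs with h
  · rw [div_pow, one_pow, Real.sq_sqrt hd, one_div_mul_cancel h]
  · simp

namespace Matrix

lemma mulVec_injective_of_rank_eq_card {K : Type*} [Field K] {m n : Type*} [Fintype m]
    [Fintype n] {H : Matrix m n K} (hH : H.rank = Fintype.card n) :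
    Function.Injective H.mulVec := by
  rw [mulVec_injective_iff, linearIndependent_iff_card_eq_finrank_span, ← hH,
    rank_eq_finrank_span_cols]
  rfl

lemma diagonal_mul_apply_eq_smul {R : Type*} [Semiring R] {m n : Type*} [Fintype m]
    [DecidableEq m] (d : m → R) (W : Matrix m n R) (i : m) :
    (diagonal d * W) i = d i • W i := by
  ext j
  simp [diagonal_mul]

lemma dotProduct_mulVec_normalized_row_eq_ite {m : Type*} [Fintype m] [DecidableEq m]
    {S W : Matrix m m ℝ} (hS : S.PosSemidef) (hW : W * S * Wᵀ = W * S) (i : m) :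
    let Om : Matrix m m ℝ := diagonal fun j =>
      if (W * S) j j ≠ 0 then 1 / Real.sqrt ((W * S) j j) else 0
    (Om * W) i ⬝ᵥ S *ᵥ (Om * W) i = if (W * S) i i ≠ 0 then 1 else 0 := by
  intro Om
  have hquad : W i ⬝ᵥ S *ᵥ W i = (W * S) i i := by
    rw [← hW, mul_mul_apply, transpose_transpose]
  have hdiag : 0 ≤ (W * S) i i := by
    simpa only [star_trivial, hquad] using hS.dotProduct_mulVec_nonneg (W i)
  rw [diagonal_mul_apply_eq_smul, mulVec_smul, smul_dotProduct, dotProduct_smul, hquad,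
    smul_eq_mul, smul_eq_mul, ← mul_assoc, ← sq, sq_ite_one_div_sqrt_mul_self hdiag]

variable {R : Type*} [CommRing R] {m n : Type*} [Fintype m] [DecidableEq m] [Fintype n]
  [DecidableEq n]

noncomputable def residueMatrix (H : Matrix m n R) (S : Matrix m m R) : Matrix m m R :=
  1 - H * (Hᵀ * S⁻¹ * H)⁻¹ * Hᵀ * S⁻¹

variable {H : Matrix m n R} {S : Matrix m m R}

lemma residueMatrix_mul_eq_zero (hK : IsUnit (Hᵀ * S⁻¹ * H).det) :
    residueMatrix H S * H = 0 := by
  rw [residueMatrix, Matrix.sub_mul, Matrix.one_mul, sub_eq_zero]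
  calc H = H * ((Hᵀ * S⁻¹ * H)⁻¹ * (Hᵀ * S⁻¹ * H)) := by
        rw [nonsing_inv_mul _ hK, Matrix.mul_one]
    _ = H * (Hᵀ * S⁻¹ * H)⁻¹ * Hᵀ * S⁻¹ * H := by simp only [Matrix.mul_assoc]

lemma isIdempotentElem_residueMatrix (hK : IsUnit (Hᵀ * S⁻¹ * H).det) :
    IsIdempotentElem (residueMatrix H S) := by
  rw [IsIdempotentElem]
  conv_lhs => enter [2]; rw [residueMatrix]
  rw [Matrix.mul_sub, Matrix.mul_one, sub_eq_self]
  simp only [← Matrix.mul_assoc, residueMatrix_mul_eq_zero hK, Matrix.zero_mul]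

lemma residueMatrix_mul_eq_sub (hS : IsUnit S.det) :
    residueMatrix H S * S = S - H * (Hᵀ * S⁻¹ * H)⁻¹ * Hᵀ := by
  rw [residueMatrix, Matrix.sub_mul, Matrix.one_mul, Matrix.mul_assoc _ S⁻¹,
    nonsing_inv_mul _ hS, Matrix.mul_one]

lemma isSymm_residueMatrix_mul (hS : IsUnit S.det) (hSsymm : S.IsSymm) :
    (residueMatrix H S * S).IsSymm := by
  have hK : (Hᵀ * S⁻¹ * H).IsSymm := by
    rw [IsSymm, transpose_mul, transpose_mul, transpose_transpose, transpose_nonsing_inv,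
      hSsymm.eq, Matrix.mul_assoc]
  rw [residueMatrix_mul_eq_sub hS]
  refine hSsymm.sub ?_
  rw [IsSymm, transpose_mul, transpose_mul, transpose_transpose, transpose_nonsing_inv, hK.eq,
    ← Matrix.mul_assoc]

lemma residueMatrix_mul_mul_transpose (hK : IsUnit (Hᵀ * S⁻¹ * H).det) (hS : IsUnit S.det)
    (hSsymm : S.IsSymm) :
    residueMatrix H S * S * (residueMatrix H S)ᵀ = residueMatrix H S * S := by
  have hsymm := (isSymm_residueMatrix_mul (H := H) hS hSsymm).eq
  rw [transpose_mul, hSsymm.eq] at hsymm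
  rw [Matrix.mul_assoc, hsymm, ← Matrix.mul_assoc, (isIdempotentElem_residueMatrix hK).eq]

end Matrix

theorem expected_framed_residue_energy_general {m n : ℕ}
    (H : Matrix (Fin m) (Fin n) ℝ) (hH : H.rank = n)
    (Sig : Matrix (Fin m) (Fin m) ℝ) (hSig : Sig.PosDef)
    {Ω' : Type*} [MeasurableSpace Ω'] (P : Measure Ω')
    (e : Ω' → Fin m → ℝ)
    (hGauss : IsCenteredGaussianVector P e Sig)
    (x : Fin n → ℝ) (a : Fin m → ℝ) (F : Finset (Fin m)) :
    let W : Matrix (Fin m) (Fin m) ℝ := 1 - H * (Hᵀ * Sig⁻¹ * H)⁻¹ * Hᵀ * Sig⁻¹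
    let Om : Matrix (Fin m) (Fin m) ℝ :=
      Matrix.diagonal fun i =>
        if (W * Sig) i i ≠ 0 then 1 / Real.sqrt ((W * Sig) i i) else 0
    ∫ ω, (∑ i ∈ F, ((Om * W).mulVec (H.mulVec x + e ω + a) i) ^ 2) ∂P =
      ∑ i ∈ F, ((Om * W).mulVec a i) ^ 2 +
        (F.filter fun i => (W * Sig) i i ≠ 0).card := by
  intro W Om
  have hK : (Hᵀ * Sig⁻¹ * H).PosDef := by
    simpa only [conjTranspose_eq_transpose_of_trivial] using
      hSig.inv.conjTranspose_mul_mul_same (mulVec_injective_of_rank_eq_card (by simpa using hH))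
  have hKunit : IsUnit (Hᵀ * Sig⁻¹ * H).det := (isUnit_iff_isUnit_det _).1 hK.isUnit
  have hSunit : IsUnit Sig.det := (isUnit_iff_isUnit_det _).1 hSig.isUnit
  have hWH : W * H = 0 := residueMatrix_mul_eq_zero hKunit
  have hWSW : W * Sig * Wᵀ = W * Sig :=
    residueMatrix_mul_mul_transpose hKunit hSunit (isHermitian_iff_isSymm.1 hSig.1)
  have hresidue (ω : Ω') : (Om * W) *ᵥ (H *ᵥ x + e ω + a) = (Om * W) *ᵥ (e ω + a) := by
    rw [add_assoc, mulVec_add, mulVec_mulVec, Matrix.mul_assoc, hWH, Matrix.mul_zero,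
      zero_mulVec, zero_add]
  have hvariance (i : Fin m) : (((Om * W) i ⬝ᵥ Sig *ᵥ (Om * W) i).toNNReal : ℝ) =
      if (W * Sig) i i ≠ 0 then 1 else 0 := by
    rw [dotProduct_mulVec_normalized_row_eq_ite hSig.posSemidef hWSW]
    split_ifs <;> simp
  simp_rw [hresidue]
  rw [hGauss.integral_sum_sq_mulVec_add, Finset.sum_add_distrib,
    Finset.sum_congr rfl fun i _ => hvariance i, Finset.sum_boole, add_comm]

/-- **Expected energy of normalized residues at the framed meters (eq. (17)).**
For Gaussian noise `e ~ N(0, Σ)`, attack vector `a`, and normalized residue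
`r̃ = Ω W (Hx + e + a)`, the expected energy of `r̃` on a framed meter set `F` is
`∑_{i∈F} (Ω W a)_i² + C`, where `C` is the number of meters `i ∈ F` with
`(WΣ)_{ii} ≠ 0` (i.e., those not forming a single-element critical set). -/
theorem expected_framed_residue_energy {m n : ℕ}
    (H : Matrix (Fin m) (Fin n) ℝ) (hH : H.rank = n)
    (Sig : Matrix (Fin m) (Fin m) ℝ) (hSig : Sig.PosDef)
    {Ω' : Type*} [MeasurableSpace Ω'] (P : Measure Ω') [IsProbabilityMeasure P]
    (e : Ω' → Fin m → ℝ) (he : Measurable e)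
    (hGauss : IsCenteredGaussianVector P e Sig)
    (x : Fin n → ℝ) (a : Fin m → ℝ) (F : Finset (Fin m)) :
    let W : Matrix (Fin m) (Fin m) ℝ := 1 - H * (Hᵀ * Sig⁻¹ * H)⁻¹ * Hᵀ * Sig⁻¹
    let Om : Matrix (Fin m) (Fin m) ℝ :=
      Matrix.diagonal fun i =>
        if (W * Sig) i i ≠ 0 then 1 / Real.sqrt ((W * Sig) i i) else 0
    ∫ ω, (∑ i ∈ F, ((Om * W).mulVec (H.mulVec x + e ω + a) i) ^ 2) ∂P =
      ∑ i ∈ F, ((Om * W).mulVec a i) ^ 2 +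
        (F.filter fun i => (W * Sig) i i ≠ 0).card :=
  expected_framed_residue_energy_general H hH Sig hSig P e hGauss x a F
end

section
/- Let H be a real m×n matrix and let S_A, S_F ⊆ {1,…,m} be disjoint sets of meter indices. Let H₀ be H with the rows in S_F zeroed out and H̄ be H with the rows in S_A ∪ S_F deleted. If the matrix obtained from H by deleting only the rows in S_F has full column rank n, then the linear map x₀ ↦ H₀ x₀ is injective on the null space of H̄, and the dimension of R(H₀) ∩ A, where A = {a ∈ ℝ^m : a_i = 0 for all i ∉ S_A}, equals the dimension of the null space of H̄. -/
open Matrix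

/-- The set `A = {a ∈ ℝ^m : a_i = 0 for all i ∉ S_A}` of feasible attack vectors,
as a subspace of `ℝ^m`. -/
def attackSubspace {m : ℕ} (SA : Finset (Fin m)) : Submodule ℝ (Fin m → ℝ) where
  carrier := {a | ∀ i ∉ SA, a i = 0}
  add_mem' := by intro a b ha hb i hi; simp [ha i hi, hb i hi]
  zero_mem' := by intro i _; rfl
  smul_mem' := by intro c a ha i hi; simp [ha i hi]

/-- **Dimension of the feasible attack subspace.**
If `H` with the rows in `S_F` deleted has full column rank `n`, then `x₀ ↦ H₀ x₀` is
injective on the null space of `H̄` (`H₀` being `H` with the rows in `S_F` zeroed out and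
`H̄` being `H` with the rows in `S_A ∪ S_F` deleted), and
`dim (R(H₀) ∩ A) = dim 𝒩(H̄)`. -/
theorem feasible_attack_subspace_dim {m n : ℕ}
    (H : Matrix (Fin m) (Fin n) ℝ)
    (SA SF : Finset (Fin m)) (hdis : Disjoint SA SF)
    (hrank : (H.submatrix (fun i : {i : Fin m // i ∉ SF} => (i : Fin m)) id).rank = n) :
    let H0 : Matrix (Fin m) (Fin n) ℝ :=
      Matrix.of fun i j => if i ∈ SF then 0 else H i j
    let Hbar : Matrix {i : Fin m // i ∉ SA ∪ SF} (Fin n) ℝ :=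
      H.submatrix (fun i : {i : Fin m // i ∉ SA ∪ SF} => (i : Fin m)) id
    (∀ x0 ∈ LinearMap.ker Hbar.mulVecLin, ∀ x0' ∈ LinearMap.ker Hbar.mulVecLin,
        H0.mulVec x0 = H0.mulVec x0' → x0 = x0') ∧
    Module.finrank ℝ ↥(LinearMap.range H0.mulVecLin ⊓ attackSubspace SA) =
      Module.finrank ℝ ↥(LinearMap.ker Hbar.mulVecLin) := by
  intro H0 Hbar
  set Hr : Matrix {i : Fin m // i ∉ SF} (Fin n) ℝ :=
    H.submatrix (fun i : {i : Fin m // i ∉ SF} => (i : Fin m)) id with hHrdef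
  -- H0 mulVec formula
  have hH0 : ∀ (x : Fin n → ℝ) (i : Fin m),
      H0.mulVec x i = if i ∈ SF then 0 else H.mulVec x i := by
    intro x i
    simp only [Matrix.mulVec, dotProduct, H0, Matrix.of_apply]
    split
    · simp
    · rfl
  have hHr : ∀ (x : Fin n → ℝ) (i : {i : Fin m // i ∉ SF}),
      Hr.mulVec x i = H.mulVec x (i : Fin m) := fun _ _ => rfl
  have hHbar : ∀ (x : Fin n → ℝ) (i : {i : Fin m // i ∉ SA ∪ SF}),
      Hbar.mulVec x i = H.mulVec x (i : Fin m) := fun _ _ => rfl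
  -- Hr has trivial kernel
  have hkerHr : LinearMap.ker Hr.mulVecLin = ⊥ := by
    have h1 := Hr.mulVecLin.finrank_range_add_finrank_ker
    rw [Module.finrank_fin_fun] at h1
    have h2 : Module.finrank ℝ ↥(LinearMap.range Hr.mulVecLin) = n := hrank
    rw [h2] at h1
    have h3 : Module.finrank ℝ ↥(LinearMap.ker Hr.mulVecLin) = 0 := by omega
    exact Submodule.finrank_eq_zero.mp h3
  have hHrinj : ∀ x : Fin n → ℝ, Hr.mulVec x = 0 → x = 0 := by
    intro x hx
    have hxm : x ∈ LinearMap.ker Hr.mulVecLin := hx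
    rw [hkerHr] at hxm
    exact hxm
  -- injectivity of H0 on all of ℝⁿ
  have hinj : ∀ x x' : Fin n → ℝ, H0.mulVec x = H0.mulVec x' → x = x' := by
    intro x x' hxx
    have hz : Hr.mulVec (x - x') = 0 := by
      funext i
      have hi : (i : Fin m) ∉ SF := i.2
      have h1 : H.mulVec x i = H.mulVec x' i := by
        have := congrFun hxx i
        rwa [hH0, hH0, if_neg hi, if_neg hi] at this
      rw [Matrix.mulVec_sub]
      simp only [Pi.sub_apply, Pi.zero_apply, hHr, h1, sub_self]
    exact sub_eq_zero.mp (hHrinj _ hz)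
  refine ⟨fun x _ x' _ h => hinj x x' h, ?_⟩
  -- Build the linear equiv ker Hbar ≃ range H0 ⊓ A
  have hmem : ∀ x ∈ LinearMap.ker Hbar.mulVecLin,
      H0.mulVec x ∈ LinearMap.range H0.mulVecLin ⊓ attackSubspace SA := by
    intro x hx
    refine ⟨⟨x, rfl⟩, ?_⟩
    intro i hi
    rw [hH0]
    by_cases hiF : i ∈ SF
    · simp [hiF]
    · rw [if_neg hiF]
      have hiU : i ∉ SA ∪ SF := by simp [hi, hiF]
      have := congrFun (LinearMap.mem_ker.mp hx) ⟨i, hiU⟩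
      exact this
  let f : ↥(LinearMap.ker Hbar.mulVecLin) →ₗ[ℝ]
      ↥(LinearMap.range H0.mulVecLin ⊓ attackSubspace SA) :=
    LinearMap.codRestrict _ (H0.mulVecLin.domRestrict (LinearMap.ker Hbar.mulVecLin))
      (fun x => hmem x.1 x.2)
  have hfinj : Function.Injective f := by
    intro x x' h
    have : H0.mulVec x.1 = H0.mulVec x'.1 := congrArg Subtype.val h
    exact Subtype.ext (hinj _ _ this)
  have hfsurj : Function.Surjective f := by
    rintro ⟨a, ⟨x, hx⟩, haA⟩
    have hxker : x ∈ LinearMap.ker Hbar.mulVecLin := by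
      rw [LinearMap.mem_ker]
      funext i
      have hiA : (i : Fin m) ∉ SA := fun hiA => (by simp [hiA] : (i : Fin m) ∈ SA ∪ SF) |> i.2
      have hiF : (i : Fin m) ∉ SF := fun hiF => (by simp [hiF] : (i : Fin m) ∈ SA ∪ SF) |> i.2
      have ha0 : a (i : Fin m) = 0 := haA _ hiA
      have : H0.mulVec x (i : Fin m) = 0 := by rw [show H0.mulVec x = a from hx]; exact ha0
      rw [hH0, if_neg hiF] at this
      show Hbar.mulVec x i = 0
      rw [hHbar]
      exact this
    exact ⟨⟨x, hxker⟩, Subtype.ext hx⟩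
  exact (LinearEquiv.ofBijective f ⟨hfinj, hfsurj⟩).finrank_eq.symm
end

section
/- Let H be a real m×n matrix with full column rank n, and let S_A and S_F be disjoint nonempty sets of meter indices such that S_A ∪ S_F is a critical set. Let H₀ be H with the rows in S_F zeroed out and A = {a ∈ ℝ^m : a_i = 0 for all i ∉ S_A}. Then the subspace R(H₀) ∩ A is exactly one-dimensional. -/
open Matrix

/-- A real matrix with full column rank has trivial kernel. -/
lemma aux_ker_eq_bot {ι : Type*} [Fintype ι] {n : ℕ} (M : Matrix ι (Fin n) ℝ)
    (hM : M.rank = n) : LinearMap.ker M.mulVecLin = ⊥ := by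
  have h1 := LinearMap.finrank_range_add_finrank_ker M.mulVecLin
  rw [Module.finrank_fin_fun] at h1
  have h2 : M.rank = Module.finrank ℝ (LinearMap.range M.mulVecLin) := rfl
  have h3 : Module.finrank ℝ (LinearMap.ker M.mulVecLin) = 0 := by omega
  exact Submodule.finrank_eq_zero.mp h3

/-- **One-dimensional feasible attack subspace for a critical set.**
If `H` has full column rank `n` and the disjoint nonempty sets `S_A` (adversary meters)
and `S_F` (framed meters) satisfy that `S_A ∪ S_F` is a critical set, then
`R(H₀) ∩ A` is exactly one-dimensional, where `H₀` is `H` with the rows in `S_F`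
zeroed out and `A = {a : a_i = 0 for all i ∉ S_A}`. -/
theorem feasible_subspace_one_dimensional {m n : ℕ}
    (H : Matrix (Fin m) (Fin n) ℝ) (hH : H.rank = n)
    (SA SF : Finset (Fin m)) (hdis : Disjoint SA SF)
    (hSA : SA.Nonempty) (hSF : SF.Nonempty)
    (hcrit :
      (H.submatrix (fun i : {i : Fin m // i ∉ SA ∪ SF} => (i : Fin m)) id).rank < n)
    (hmin : ∀ S' : Finset (Fin m), S' ⊂ SA ∪ SF →
      (H.submatrix (fun i : {i : Fin m // i ∉ S'} => (i : Fin m)) id).rank = n) :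
    let H0 : Matrix (Fin m) (Fin n) ℝ :=
      Matrix.of fun i j => if i ∈ SF then 0 else H i j
    Module.finrank ℝ ↥(LinearMap.range H0.mulVecLin ⊓ attackSubspace SA) = 1 := by
  intro H0
  classical
  obtain ⟨s, hs⟩ := hSA
  set HT := H.submatrix (fun i : {i : Fin m // i ∉ SA ∪ SF} => (i : Fin m)) id with hHTdef
  set K := LinearMap.ker HT.mulVecLin with hKdef
  -- characterization of K
  have hKmem : ∀ x, x ∈ K ↔ ∀ i : Fin m, i ∉ SA ∪ SF → H.mulVec x i = 0 := by
    intro x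
    constructor
    · intro hx i hi
      have h := congrFun (show HT.mulVec x = 0 from hx) ⟨i, hi⟩
      simpa [hHTdef, Matrix.mulVec, Matrix.submatrix_apply, dotProduct] using h
    · intro hx
      have h : HT.mulVec x = 0 := by
        funext i
        simpa [hHTdef, Matrix.mulVec, Matrix.submatrix_apply, dotProduct] using hx i i.2
      simpa [hKdef, Matrix.mulVecLin_apply] using h
  -- finrank K ≤ 1
  have hKle : Module.finrank ℝ K ≤ 1 := by
    set f : (Fin n → ℝ) →ₗ[ℝ] ℝ := (LinearMap.proj s).comp H.mulVecLin with hfdef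
    have hinj : Function.Injective (f.domRestrict K) := by
      rw [← LinearMap.ker_eq_bot, LinearMap.ker_eq_bot']
      rintro ⟨x, hx⟩ hfx
      have hfx' : H.mulVec x s = 0 := by
        simpa [hfdef, Matrix.mulVecLin_apply] using congrArg id hfx
      have hss : (SA ∪ SF).erase s ⊂ SA ∪ SF :=
        Finset.erase_ssubset (Finset.mem_union_left _ hs)
      have hker := aux_ker_eq_bot _ (hmin _ hss)
      have hx0 : x = 0 := by
        have hmem : (H.submatrix
            (fun i : {i : Fin m // i ∉ (SA ∪ SF).erase s} => (i : Fin m)) id).mulVec x = 0 := by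
          funext i
          have hi := i.2
          by_cases his : (i : Fin m) = s
          · simpa [Matrix.mulVec, Matrix.submatrix_apply, dotProduct, his] using hfx'
          · have hiU : (i : Fin m) ∉ SA ∪ SF := by
              intro hu
              exact hi (Finset.mem_erase.mpr ⟨his, hu⟩)
            simpa [Matrix.mulVec, Matrix.submatrix_apply, dotProduct] using
              (hKmem x).mp hx i hiU
        have : x ∈ LinearMap.ker (H.submatrix
            (fun i : {i : Fin m // i ∉ (SA ∪ SF).erase s} => (i : Fin m)) id).mulVecLin := by
          simpa [Matrix.mulVecLin_apply] using hmem
        rw [hker] at this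
        simpa using this
      exact Subtype.ext hx0
    calc Module.finrank ℝ K ≤ Module.finrank ℝ ℝ :=
          LinearMap.finrank_le_finrank_of_injective hinj
      _ = 1 := Module.finrank_self ℝ
  -- finrank K = 1
  have hrn := LinearMap.finrank_range_add_finrank_ker HT.mulVecLin
  rw [Module.finrank_fin_fun] at hrn
  have hrank : HT.rank = Module.finrank ℝ (LinearMap.range HT.mulVecLin) := rfl
  have hK1 : Module.finrank ℝ K = 1 := by
    have hcrit' : Module.finrank ℝ (LinearMap.range HT.mulVecLin) < n := hrank ▸ hcrit
    rw [← hKdef] at hrn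
    omega
  -- H0 injective
  have hSFss : SF ⊂ SA ∪ SF := by
    refine ⟨Finset.subset_union_right, fun hsub => ?_⟩
    have : s ∈ SF := hsub (Finset.mem_union_left _ hs)
    exact (Finset.disjoint_left.mp hdis hs) this
  have hker0 : LinearMap.ker H0.mulVecLin = ⊥ := by
    rw [LinearMap.ker_eq_bot']
    intro x hx
    have hk := aux_ker_eq_bot _ (hmin SF hSFss)
    have hmem : (H.submatrix (fun i : {i : Fin m // i ∉ SF} => (i : Fin m)) id).mulVec x = 0 := by
      funext i
      have h := congrFun (show H0.mulVec x = 0 from hx) i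
      have hrow : ∀ j, H0 (i : Fin m) j = H (i : Fin m) j := by
        intro j; simp [H0, i.2]
      simp only [Matrix.mulVec, Matrix.submatrix_apply, dotProduct, id] at h ⊢
      simpa [hrow] using h
    have : x ∈ LinearMap.ker (H.submatrix
        (fun i : {i : Fin m // i ∉ SF} => (i : Fin m)) id).mulVecLin := by
      simpa [Matrix.mulVecLin_apply] using hmem
    rw [hk] at this
    simpa using this
  have hinj0 : Function.Injective H0.mulVecLin := LinearMap.ker_eq_bot.mp hker0
  -- range ⊓ A = image of K
  have heq : LinearMap.range H0.mulVecLin ⊓ attackSubspace SA = K.map H0.mulVecLin := by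
    ext y
    simp only [Submodule.mem_inf, LinearMap.mem_range, Submodule.mem_map]
    constructor
    · rintro ⟨⟨x, rfl⟩, hy⟩
      refine ⟨x, (hKmem x).mpr fun i hi => ?_, rfl⟩
      have hiSA : i ∉ SA := fun h => hi (Finset.mem_union_left _ h)
      have hiSF : i ∉ SF := fun h => hi (Finset.mem_union_right _ h)
      have hy0 : H0.mulVecLin x i = 0 := hy i hiSA
      have : H0.mulVec x i = H.mulVec x i := by
        simp [Matrix.mulVec, dotProduct, H0, hiSF]
      rw [← this]
      simpa [Matrix.mulVecLin_apply] using hy0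
    · rintro ⟨x, hx, rfl⟩
      refine ⟨⟨x, rfl⟩, fun i hi => ?_⟩
      by_cases hiSF : i ∈ SF
      · simp [Matrix.mulVecLin_apply, Matrix.mulVec, dotProduct, H0, hiSF]
      · have hiU : i ∉ SA ∪ SF := by
          simp [Finset.mem_union, hi, hiSF]
        have h0 := (hKmem x).mp hx i hiU
        have : H0.mulVec x i = H.mulVec x i := by
          simp [Matrix.mulVec, dotProduct, H0, hiSF]
        simpa [Matrix.mulVecLin_apply, this] using h0
  rw [heq, ← hK1]
  exact (LinearEquiv.finrank_eq (Submodule.equivMapOfInjective H0.mulVecLin hinj0 K)).symm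
end
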